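/- arXiv:0905.2423 — 3 statements merged into one kernel-verified Lean document; each statement's English description precedes it below -/
import Mathlib

section
/- Let {p_i} be orthogonal polynomials with p_0 ≡ 1 satisfying x·p_i = a_i p_{i+1} + b_i p_i + c_i p_{i−1}, and L a linear functional with L(p_i p_j) = 0 for i ≠ j and L(1) = 1. Then for all s ≥ 2, L(x^s p_{s−1}) = c_1 c_2 ··· c_{s−1} · (b_0 + b_1 + ··· + b_{s−1}). -/
open Polynomial

theorem stmt4 (p : ℕ → ℝ[X]) (a b c : ℕ → ℝ) (L : ℝ[X] →ₗ[ℝ] ℝ)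
    (hp0 : p 0 = 1)
    (hdeg : ∀ i, (p i).degree = i)
    (hrec0 : X * p 0 = C (a 0) * p 1 + C (b 0) * p 0)
    (hrec : ∀ i : ℕ,
      X * p (i + 1) = C (a (i + 1)) * p (i + 2) + C (b (i + 1)) * p (i + 1) + C (c (i + 1)) * p i)
    (horth : ∀ i j, i ≠ j → L (p i * p j) = 0)
    (hL1 : L 1 = 1)
    (s : ℕ) (hs : 2 ≤ s) :
    L (X ^ s * p (s - 1)) =
      (∏ k ∈ Finset.Icc 1 (s - 1), c k) * (∑ i ∈ Finset.range s, b i) := by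
  have Lsmul : ∀ (r : ℝ) (q : ℝ[X]), L (C r * q) = r * L q := fun r q => by
    rw [← smul_eq_C_mul, map_smul, smul_eq_mul]
  have hexp : ∀ (k m : ℕ), L (X ^ (k + 1) * p (m + 1)) =
      a (m + 1) * L (X ^ k * p (m + 2)) + b (m + 1) * L (X ^ k * p (m + 1)) +
        c (m + 1) * L (X ^ k * p m) := by
    intro k m
    have h : X ^ (k + 1) * p (m + 1) = C (a (m + 1)) * (X ^ k * p (m + 2)) +
        C (b (m + 1)) * (X ^ k * p (m + 1)) + C (c (m + 1)) * (X ^ k * p m) := by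
      calc X ^ (k + 1) * p (m + 1) = X ^ k * (X * p (m + 1)) := by ring
        _ = _ := by rw [hrec m]; ring
    rw [h, map_add, map_add, Lsmul, Lsmul, Lsmul]
  have hzero : ∀ k j, k < j → L (X ^ k * p j) = 0 := by
    intro k
    induction k with
    | zero =>
      intro j hj
      have h := horth 0 j (by omega)
      rw [hp0, one_mul] at h
      simpa using h
    | succ k ih =>
      intro j hj
      obtain ⟨m, rfl⟩ : ∃ m, j = m + 1 := ⟨j - 1, by omega⟩
      rw [hexp, ih (m + 2) (by omega), ih (m + 1) (by omega), ih m (by omega)]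
      ring
  have hdiag : ∀ k, L (X ^ k * p k) = ∏ i ∈ Finset.Icc 1 k, c i := by
    intro k
    induction k with
    | zero => simp [hp0, hL1]
    | succ k ih =>
      rw [hexp, ih, hzero k (k + 2) (by omega), hzero k (k + 1) (by omega),
        Finset.prod_Icc_succ_top (by omega : 1 ≤ k + 1)]
      ring
  have hsub : ∀ k, L (X ^ (k + 1) * p k) =
      (∏ i ∈ Finset.Icc 1 k, c i) * (∑ i ∈ Finset.range (k + 1), b i) := by
    intro k
    induction k with
    | zero =>
      have h : X ^ 1 * p 0 = C (a 0) * p 1 + C (b 0) * p 0 := by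
        rw [pow_one, hrec0]
      rw [h, map_add, Lsmul, Lsmul]
      have h1 : L (p 1) = 0 := by simpa using hzero 0 1 (by omega)
      rw [hp0, h1, hL1]
      simp
    | succ k ih =>
      rw [hexp, ih, hdiag (k + 1), hzero (k + 1) (k + 2) (by omega),
        Finset.prod_Icc_succ_top (by omega : 1 ≤ k + 1)]
      simp only [Finset.sum_range_succ]
      ring
  obtain ⟨k, rfl⟩ : ∃ k, s = k + 1 := ⟨s - 1, by omega⟩
  simpa using hsub k
end

section
/- For the Johnson scheme coefficients b_i = ((n+2)w(n−w) − n·i(n−i+1)) / ((n−2i)(n−2i+2)), one has Σ_{i=0}^{s−1} b_i = (w·s·(n−w) − C(s,2)·n) / (n − 2(s−1)), for all integers 1 ≤ s with n − 2(s−1) > 0. -/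
/-!
The sum telescopes: with `F s` the claimed closed form, `F (i + 1) - F i = b_i` is an identity
of rational functions in `n, w, i` whose denominators are exactly those of `b_i`, and `F 0 = 0`.
-/

section

variable {K : Type*} [Field K]

def johnsonCoeff (n w i : K) : K :=
  ((n + 2) * w * (n - w) - n * i * (n - i + 1)) / ((n - 2 * i) * (n - 2 * i + 2))

def johnsonPartialSum (n w s : K) : K :=
  (w * s * (n - w) - (s * (s - 1) / 2) * n) / (n - 2 * (s - 1))

@[simp]
lemma johnsonPartialSum_zero (n w : K) : johnsonPartialSum n w 0 = 0 := by
  simp [johnsonPartialSum]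

lemma johnsonPartialSum_add_one_sub [CharZero K] {n w i : K}
    (h₁ : n - 2 * i ≠ 0) (h₂ : n - 2 * i + 2 ≠ 0) :
    johnsonPartialSum n w (i + 1) - johnsonPartialSum n w i = johnsonCoeff n w i := by
  have hshift : n - 2 * (i - 1) = n - 2 * i + 2 := by ring
  unfold johnsonPartialSum johnsonCoeff
  rw [add_sub_cancel_right, hshift, div_sub_div _ _ h₁ h₂,
    div_eq_div_iff (mul_ne_zero h₁ h₂) (mul_ne_zero h₁ h₂)]
  ring

lemma sum_range_johnsonCoeff [CharZero K] {n w : K} {s : ℕ}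
    (h : ∀ i < s, n - 2 * i ≠ 0 ∧ n - 2 * i + 2 ≠ 0) :
    ∑ i ∈ Finset.range s, johnsonCoeff n w (i : K) = johnsonPartialSum n w (s : K) := by
  calc ∑ i ∈ Finset.range s, johnsonCoeff n w (i : K)
      = ∑ i ∈ Finset.range s,
          (johnsonPartialSum n w ((i + 1 : ℕ) : K) - johnsonPartialSum n w (i : K)) := by
        refine Finset.sum_congr rfl fun i hi => ?_
        obtain ⟨h₁, h₂⟩ := h i (Finset.mem_range.mp hi)
        rw [Nat.cast_succ, johnsonPartialSum_add_one_sub h₁ h₂]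
    _ = johnsonPartialSum n w (s : K) := by
        rw [Finset.sum_range_sub (fun i : ℕ => johnsonPartialSum n w (i : K))]
        simp

end

theorem stmt6_general (n w s : ℕ) (hn : 2 * s ≤ n) :
    (∑ i ∈ Finset.range s,
        (((n : ℝ) + 2) * w * ((n : ℝ) - w) - (n : ℝ) * i * ((n : ℝ) - i + 1)) /
          (((n : ℝ) - 2 * i) * ((n : ℝ) - 2 * i + 2)))
      = ((w : ℝ) * s * ((n : ℝ) - w) - ((s : ℝ) * ((s : ℝ) - 1) / 2) * n) /
          ((n : ℝ) - 2 * ((s : ℝ) - 1)) := by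
  refine sum_range_johnsonCoeff fun i hi => ?_
  have : (2 * i + 2 : ℝ) ≤ n := by exact_mod_cast (by omega : 2 * i + 2 ≤ n)
  constructor <;> linarith

theorem stmt6 (n w s : ℕ) (hw : 0 < w) (hs : 1 ≤ s) (hn : 2 * s ≤ n) :
    (∑ i ∈ Finset.range s,
        (((n : ℝ) + 2) * w * ((n : ℝ) - w) - (n : ℝ) * i * ((n : ℝ) - i + 1)) /
          (((n : ℝ) - 2 * i) * ((n : ℝ) - 2 * i + 2)))
      = ((w : ℝ) * s * ((n : ℝ) - w) - ((s : ℝ) * ((s : ℝ) - 1) / 2) * n) /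
          ((n : ℝ) - 2 * ((s : ℝ) - 1)) :=
  stmt6_general n w s hn
end

section
/- Let C = {x_1,…,x_M} be a finite set of points in a metric-like space with positive-definite kernel structure: suppose there are real matrices H_0,…,H_s with H_l of size M×h_l such that for the diagonal matrix F = f_0 I_{h_0} ⊕ ⋯ ⊕ f_s I_{h_s} and H = (H_0,…,H_s), the matrix H F Hᵀ equals f(0)·I_M with f(0) > 0. Then M ≤ Σ_{i: f_i > 0} h_i. -/
open Matrix

theorem stmt10 (M s : ℕ) (hM : 0 < M) (h : Fin (s + 1) → ℕ) (hh : ∀ i, 0 < h i)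
    (f : Fin (s + 1) → ℝ) (f0 : ℝ) (hf0 : 0 < f0)
    (H : Matrix (Fin M) ((i : Fin (s + 1)) × Fin (h i)) ℝ)
    (hA : H * Matrix.diagonal (fun p : (i : Fin (s + 1)) × Fin (h i) => f p.1) * Hᵀ
        = f0 • (1 : Matrix (Fin M) (Fin M) ℝ)) :
    M ≤ ∑ i ∈ Finset.univ.filter (fun i => 0 < f i), h i := by
  classical
  by_contra hlt
  push_neg at hlt
  have hcard : Fintype.card {p : (i : Fin (s + 1)) × Fin (h i) // 0 < f p.1}
      = ∑ i ∈ Finset.univ.filter (fun i => 0 < f i), h i := by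
    rw [Fintype.card_subtype, Finset.card_filter, ← Finset.univ_sigma_univ,
      Finset.sum_sigma, Finset.sum_filter]
    refine Finset.sum_congr rfl fun i _ => ?_
    split <;> simp
  set φ : (Fin M → ℝ) →ₗ[ℝ] ({p : (i : Fin (s + 1)) × Fin (h i) // 0 < f p.1} → ℝ) :=
    (LinearMap.funLeft ℝ ℝ Subtype.val).comp Hᵀ.mulVecLin with hφ
  have hninj : ¬ Function.Injective φ := by
    intro hinj
    have := LinearMap.finrank_le_finrank_of_injective hinj
    simp only [Module.finrank_pi, Fintype.card_fin, hcard] at this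
    omega
  obtain ⟨a, b, hab, hne⟩ := Function.not_injective_iff.mp hninj
  set x : Fin M → ℝ := a - b with hx
  have hxne : x ≠ 0 := sub_ne_zero.mpr hne
  have hker : φ x = 0 := by
    rw [hx, map_sub, hab, sub_self]
  set y : ((i : Fin (s + 1)) × Fin (h i)) → ℝ := Hᵀ.mulVec x with hy'
  have hy : ∀ p : (i : Fin (s + 1)) × Fin (h i), 0 < f p.1 → y p = 0 := by
    intro p hp
    have h1 := congrFun hker ⟨p, hp⟩
    simp only [hφ, LinearMap.comp_apply, Matrix.mulVecLin_apply, LinearMap.funLeft_apply,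
      Pi.zero_apply] at h1
    simpa [hy'] using h1
  have hq : x ⬝ᵥ ((H * Matrix.diagonal (fun p : (i : Fin (s + 1)) × Fin (h i) => f p.1) * Hᵀ).mulVec x)
      = ∑ p : (i : Fin (s + 1)) × Fin (h i), f p.1 * y p ^ 2 := by
    rw [← Matrix.mulVec_mulVec, ← Matrix.mulVec_mulVec, Matrix.dotProduct_mulVec,
      ← Matrix.mulVec_transpose, ← hy']
    simp only [dotProduct, Matrix.mulVec_diagonal]
    exact Finset.sum_congr rfl fun p _ => by ring
  have hle : x ⬝ᵥ ((H * Matrix.diagonal (fun p : (i : Fin (s + 1)) × Fin (h i) => f p.1) * Hᵀ).mulVec x) ≤ 0 := by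
    rw [hq]
    refine Finset.sum_nonpos fun p _ => ?_
    rcases lt_or_ge 0 (f p.1) with hp | hp
    · rw [hy p hp]; ring_nf; exact le_rfl
    · exact mul_nonpos_of_nonpos_of_nonneg hp (sq_nonneg _)
  rw [hA] at hle
  have hdot : (0 : ℝ) < x ⬝ᵥ x := by
    have h0 : x ⬝ᵥ x ≠ 0 := fun e => hxne (dotProduct_self_eq_zero.mp e)
    exact lt_of_le_of_ne (Finset.sum_nonneg fun i _ => mul_self_nonneg _) (Ne.symm h0)
  have hpos : (0 : ℝ) < x ⬝ᵥ ((f0 • (1 : Matrix (Fin M) (Fin M) ℝ)).mulVec x) := by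
    have heq : x ⬝ᵥ ((f0 • (1 : Matrix (Fin M) (Fin M) ℝ)).mulVec x) = f0 * (x ⬝ᵥ x) := by
      simp [Matrix.smul_mulVec, Matrix.one_mulVec, dotProduct_smul, smul_eq_mul]
    rw [heq]
    exact mul_pos hf0 hdot
  linarith
end
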